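/- Let R be a ring, n and k non-negative integers, and M a left R-module. The following are equivalent: (1) Ext_R^{k+1}(K, M) = 0 for every special super finitely presented left R-module K (i.e. the n-weak injective dimension of M is at most k); (2) Ext_R^{k+i}(K, M) = 0 for every special super finitely presented left R-module K and every i ≥ 1; (3) whenever 0 → M → E_0 → E_1 → ⋯ → E_k → 0 is an exact sequence of left R-modules in which E_0, …, E_{k−1} are n-weak injective, the module E_k is also n-weak injective; (4) there exists an exact sequence 0 → M → E_0 → E_1 → ⋯ → E_k → 0 of left R-modules in which every E_i is n-weak injective. -/

import Mathlib

/-! Definitions for `n`-weak injective and `n`-weak flat modules over an arbitrary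
(associative, unital, possibly noncommutative) ring `R`, following
Amini–Amzil–Bennis, "On n-weak injective and n-weak flat modules".

Left `R`-modules are types with `[Module R M]`; right `R`-modules are types with
`[Module Rᵐᵒᵖ M]`.  `Ext` is the derived functor of the ℤ-linear Yoneda functor on
`ModuleCat R`, and `Tor` is obtained as the left derived functor of the balanced
tensor product `N ⊗_R -` (constructed as a quotient of the ℤ-tensor product). -/

open CategoryTheory Limits TensorProduct

noncomputable section

universe u

namespace NWeak

variable (R : Type u) [Ring R]

/-- A left `R`-module `U` is *`n`-super finitely presented* if it admits a resolution
`⋯ → F_{n+1} → F_n → ⋯ → F_1 → F_0 → U → 0` by projective modules in which `F_i` is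
finitely generated for every `i ≥ n`. -/
def IsNSuperFP (n : ℕ) (U : Type u) [AddCommGroup U] [Module R U] : Prop :=
  ∃ (F : ℕ → ModuleCat.{u} R) (d : ∀ i, F (i + 1) ⟶ F i) (ε : F 0 →ₗ[R] U),
    (∀ i, Module.Projective R (F i)) ∧
    (∀ i, n ≤ i → Module.Finite R (F i)) ∧
    Function.Surjective ε ∧
    Function.Exact (d 0) ε ∧
    (∀ i, Function.Exact (d (i + 1)) (d i))

/-- A left `R`-module `K` is *special super finitely presented* (relative to `n`) if
there are an `n`-super finitely presented module `U` and a resolution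
`⋯ → F_{n+1} → F_n → ⋯ → F_0 → U → 0` as above such that `K ≅ Im (F_n → F_{n-1})`,
where for `n = 0` we read `K_{-1} := U`. -/
def IsSpecialSFP (n : ℕ) (K : Type u) [AddCommGroup K] [Module R K] : Prop :=
  ∃ (F : ℕ → ModuleCat.{u} R) (d : ∀ i, F (i + 1) ⟶ F i) (U : ModuleCat.{u} R)
    (ε : F 0 ⟶ U),
    (∀ i, Module.Projective R (F i)) ∧
    (∀ i, n ≤ i → Module.Finite R (F i)) ∧
    Function.Surjective ε ∧
    Function.Exact (d 0) ε ∧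
    (∀ i, Function.Exact (d (i + 1)) (d i)) ∧
    (match n with
      | 0 => Nonempty (K ≃ₗ[R] U)
      | m + 1 => Nonempty (K ≃ₗ[R] LinearMap.range (d m).hom))

/-- Vanishing of `Ext_R^i(K, M)` for left `R`-modules. -/
def extVanish (i : ℕ) (K : Type u) [AddCommGroup K] [Module R K]
    (M : Type u) [AddCommGroup M] [Module R M] : Prop :=
  Subsingleton (((Ext ℤ (ModuleCat.{u} R) i).obj
    (Opposite.op (ModuleCat.of R K))).obj (ModuleCat.of R M))

/-- A left `R`-module `M` is *`n`-weak injective* if `Ext_R^{n+1}(U, M) = 0` for every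
`n`-super finitely presented left `R`-module `U`. -/
def IsNWeakInjective (n : ℕ) (M : Type u) [AddCommGroup M] [Module R M] : Prop :=
  ∀ (U : ModuleCat.{u} R), IsNSuperFP R n U → extVanish R (n + 1) U M

/-- The left `R`-module `M` has *`n`-weak injective dimension at most `k`* if
`Ext_R^{k+1}(K, M) = 0` for every special super finitely presented left `R`-module
`K`. -/
def WIDimLE (n k : ℕ) (M : Type u) [AddCommGroup M] [Module R M] : Prop :=
  ∀ (K : ModuleCat.{u} R), IsSpecialSFP R n K → extVanish R (k + 1) K M

/-! ### The balanced tensor product and Tor -/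

/-- The additive subgroup of `N ⊗[ℤ] K` generated by the balancing relations
`(n·r) ⊗ k - n ⊗ (r·k)`. -/
def balRel (N : Type u) [AddCommGroup N] [Module Rᵐᵒᵖ N]
    (K : Type u) [AddCommGroup K] [Module R K] : AddSubgroup (N ⊗[ℤ] K) :=
  AddSubgroup.closure
    {x | ∃ (a : N) (r : R) (b : K),
      x = (MulOpposite.op r • a) ⊗ₜ[ℤ] b - a ⊗ₜ[ℤ] (r • b)}

/-- The balanced tensor product `N ⊗_R K` of a right `R`-module `N` and a left
`R`-module `K`, realized as a quotient of `N ⊗[ℤ] K`. -/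
def RTensor (N : Type u) [AddCommGroup N] [Module Rᵐᵒᵖ N]
    (K : Type u) [AddCommGroup K] [Module R K] : Type u :=
  (N ⊗[ℤ] K) ⧸ balRel R N K

instance (N : Type u) [AddCommGroup N] [Module Rᵐᵒᵖ N]
    (K : Type u) [AddCommGroup K] [Module R K] : AddCommGroup (RTensor R N K) :=
  inferInstanceAs (AddCommGroup ((N ⊗[ℤ] K) ⧸ balRel R N K))

variable {R}

/-- Functoriality of the balanced tensor product in the left-module variable. -/
def balMapRight (N : Type u) [AddCommGroup N] [Module Rᵐᵒᵖ N]
    {K K' : Type u} [AddCommGroup K] [Module R K] [AddCommGroup K'] [Module R K']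
    (f : K →ₗ[R] K') : RTensor R N K →+ RTensor R N K' :=
  QuotientAddGroup.map _ _
    (TensorProduct.map (LinearMap.id : N →ₗ[ℤ] N) (f.restrictScalars ℤ)).toAddMonoidHom
    (by
      rw [balRel, AddSubgroup.closure_le]
      rintro x ⟨a, r, b, rfl⟩
      simp only [SetLike.mem_coe, AddSubgroup.mem_comap, LinearMap.toAddMonoidHom_coe,
        map_sub, TensorProduct.map_tmul, LinearMap.coe_restrictScalars, LinearMap.id_coe,
        id_eq, LinearMap.map_smul]
      exact AddSubgroup.subset_closure ⟨a, r, f b, rfl⟩)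

/-- Functoriality of the balanced tensor product in the right-module variable. -/
def balMapLeft (K : Type u) [AddCommGroup K] [Module R K]
    {N N' : Type u} [AddCommGroup N] [Module Rᵐᵒᵖ N] [AddCommGroup N'] [Module Rᵐᵒᵖ N']
    (g : N →ₗ[Rᵐᵒᵖ] N') : RTensor R N K →+ RTensor R N' K :=
  QuotientAddGroup.map _ _
    (TensorProduct.map (g.restrictScalars ℤ) (LinearMap.id : K →ₗ[ℤ] K)).toAddMonoidHom
    (by
      rw [balRel, AddSubgroup.closure_le]
      rintro x ⟨a, r, b, rfl⟩
      simp only [SetLike.mem_coe, AddSubgroup.mem_comap, LinearMap.toAddMonoidHom_coe,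
        map_sub, TensorProduct.map_tmul, LinearMap.coe_restrictScalars, LinearMap.id_coe,
        id_eq, LinearMap.map_smul]
      exact AddSubgroup.subset_closure ⟨g a, r, b, rfl⟩)

lemma balMapRight_mk (N : Type u) [AddCommGroup N] [Module Rᵐᵒᵖ N]
    {K K' : Type u} [AddCommGroup K] [Module R K] [AddCommGroup K'] [Module R K']
    (f : K →ₗ[R] K') (y : N ⊗[ℤ] K) :
    balMapRight N f (QuotientAddGroup.mk y)
      = QuotientAddGroup.mk (TensorProduct.map (LinearMap.id : N →ₗ[ℤ] N)
          (f.restrictScalars ℤ) y) := rfl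

variable (R)

/-- The functor `K ↦ N ⊗_R K` from left `R`-modules to abelian groups, for a fixed
right `R`-module `N`. -/
def tensorFunctor (N : Type u) [AddCommGroup N] [Module Rᵐᵒᵖ N] :
    ModuleCat.{u} R ⥤ AddCommGrpCat.{u} where
  obj K := AddCommGrpCat.of (RTensor R N K)
  map {K K'} f := AddCommGrpCat.ofHom (balMapRight N f.hom)
  map_id K := by
    refine AddCommGrpCat.ext fun x => ?_
    refine QuotientAddGroup.induction_on x fun y => ?_
    show balMapRight N (LinearMap.id) (QuotientAddGroup.mk y) = QuotientAddGroup.mk y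
    rw [balMapRight_mk]
    congr 1
    refine TensorProduct.induction_on y (by simp) (fun a b => by simp) ?_
    intro s t hs ht
    simp_all [map_add]
  map_comp {K K' K''} f g := by
    refine AddCommGrpCat.ext fun x => ?_
    refine QuotientAddGroup.induction_on x fun y => ?_
    show balMapRight N (g.hom.comp f.hom) (QuotientAddGroup.mk y)
      = balMapRight N g.hom (balMapRight N f.hom (QuotientAddGroup.mk y))
    rw [balMapRight_mk, balMapRight_mk, balMapRight_mk]
    congr 1
    refine TensorProduct.induction_on y (by simp) (fun a b => by simp) ?_
    intro s t hs ht
    simp_all [map_add]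

instance (N : Type u) [AddCommGroup N] [Module Rᵐᵒᵖ N] : (tensorFunctor R N).Additive where
  map_add {K K'} {f g} := by
    refine AddCommGrpCat.ext fun x => ?_
    refine QuotientAddGroup.induction_on x fun y => ?_
    show balMapRight N (f + g).hom (QuotientAddGroup.mk y)
      = balMapRight N f.hom (QuotientAddGroup.mk y) + balMapRight N g.hom (QuotientAddGroup.mk y)
    rw [balMapRight_mk, balMapRight_mk, balMapRight_mk]
    refine (congrArg (QuotientAddGroup.mk (s := balRel R N K')) ?_).trans
      (QuotientAddGroup.mk_add _ _ _)
    refine TensorProduct.induction_on y (by simp)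
      (fun a b => by
        simp only [TensorProduct.map_tmul, LinearMap.coe_restrictScalars, LinearMap.id_coe, id_eq]
        rw [show (f + g).hom b = f.hom b + g.hom b from rfl, TensorProduct.tmul_add]) ?_
    intro s t hs ht
    simp_all [map_add]
    abel

/-- Vanishing of `Tor_i^R(N, K)` for a right `R`-module `N` and a left `R`-module `K`:
the `i`-th left derived functor of `N ⊗_R -` vanishes at `K`. -/
def torVanish (i : ℕ) (N : Type u) [AddCommGroup N] [Module Rᵐᵒᵖ N]
    (K : Type u) [AddCommGroup K] [Module R K] : Prop :=
  Subsingleton (((tensorFunctor R N).leftDerived i).obj (ModuleCat.of R K))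

/-- A right `R`-module `N` is *`n`-weak flat* if `Tor^R_{n+1}(N, U) = 0` for every
`n`-super finitely presented left `R`-module `U`. -/
def IsNWeakFlat (n : ℕ) (N : Type u) [AddCommGroup N] [Module Rᵐᵒᵖ N] : Prop :=
  ∀ (U : ModuleCat.{u} R), IsNSuperFP R n U → torVanish R (n + 1) N U

/-- The right `R`-module `N` has *`n`-weak flat dimension at most `k`* if
`Tor^R_{k+1}(N, K) = 0` for every special super finitely presented left `R`-module
`K`. -/
def WFDimLE (n k : ℕ) (N : Type u) [AddCommGroup N] [Module Rᵐᵒᵖ N] : Prop :=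
  ∀ (K : ModuleCat.{u} R), IsSpecialSFP R n K → torVanish R (k + 1) N K

/-! ### Character modules -/

/-- The character module `M⋆ = Hom_ℤ(M, ℚ/ℤ)` of a left `R`-module is a right
`R`-module via `(f · r) (m) = f (r · m)`. -/
instance charModuleRight (M : Type u) [AddCommGroup M] [Module R M] :
    Module Rᵐᵒᵖ (CharacterModule M) where
  smul ρ f := f.comp (DistribMulAction.toAddMonoidHom M ρ.unop)
  one_smul f := CharacterModule.ext _ fun m => congrArg f (one_smul R m)
  mul_smul ρ σ f := CharacterModule.ext _ fun m => congrArg f (mul_smul σ.unop ρ.unop m)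
  smul_zero ρ := CharacterModule.ext _ fun _ => rfl
  smul_add ρ f g := CharacterModule.ext _ fun _ => rfl
  add_smul ρ σ f := CharacterModule.ext _ fun m => by
    show f ((ρ.unop + σ.unop) • m) = f (ρ.unop • m) + f (σ.unop • m)
    rw [add_smul, map_add]
  zero_smul f := CharacterModule.ext _ fun m => by
    show f ((0 : R) • m) = 0
    rw [zero_smul, map_zero]

/-- The character module `N⋆ = Hom_ℤ(N, ℚ/ℤ)` of a right `R`-module is a left
`R`-module via `(r · f) (m) = f (m · r)`. -/
instance charModuleLeft (N : Type u) [AddCommGroup N] [Module Rᵐᵒᵖ N] :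
    Module R (CharacterModule N) where
  smul r f := f.comp (DistribMulAction.toAddMonoidHom N (MulOpposite.op r))
  one_smul f := CharacterModule.ext _ fun m => congrArg f (one_smul Rᵐᵒᵖ m)
  mul_smul r s f := CharacterModule.ext _ fun m => congrArg f (by
    show (MulOpposite.op (r * s)) • m = (MulOpposite.op s) • (MulOpposite.op r) • m
    rw [← mul_smul, MulOpposite.op_mul])
  smul_zero r := CharacterModule.ext _ fun _ => rfl
  smul_add r f g := CharacterModule.ext _ fun _ => rfl
  add_smul r s f := CharacterModule.ext _ fun m => by
    show f ((MulOpposite.op r + MulOpposite.op s) • m)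
      = f ((MulOpposite.op r) • m) + f ((MulOpposite.op s) • m)
    rw [add_smul, map_add]
  zero_smul f := CharacterModule.ext _ fun m => by
    show f ((0 : Rᵐᵒᵖ) • m) = 0
    rw [zero_smul, map_zero]

/-! ### Purity and flatness -/

/-- A submodule `N` of a left `R`-module `M` is *pure* if for every right `R`-module
`L` the induced map `L ⊗_R N → L ⊗_R M` is injective. -/
def IsPureSubmodule (M : Type u) [AddCommGroup M] [Module R M] (N : Submodule R M) :
    Prop :=
  ∀ (L : Type u) [AddCommGroup L] [Module Rᵐᵒᵖ L],
    Function.Injective (balMapRight L N.subtype)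

/-- A submodule `N` of a right `R`-module `M` is *pure* if for every left `R`-module
`L` the induced map `N ⊗_R L → M ⊗_R L` is injective. -/
def IsPureSubmoduleRight (M : Type u) [AddCommGroup M] [Module Rᵐᵒᵖ M]
    (N : Submodule Rᵐᵒᵖ M) : Prop :=
  ∀ (L : Type u) [AddCommGroup L] [Module R L],
    Function.Injective (balMapLeft L N.subtype)

/-- A left `R`-module `M` is *flat* if tensoring with `M` preserves injectivity of
maps of right `R`-modules. -/
def IsFlatLeft (M : Type u) [AddCommGroup M] [Module R M] : Prop :=
  ∀ (A B : Type u) [AddCommGroup A] [Module Rᵐᵒᵖ A] [AddCommGroup B] [Module Rᵐᵒᵖ B]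
    (g : A →ₗ[Rᵐᵒᵖ] B), Function.Injective g → Function.Injective (balMapLeft M g)

/-- The left `R`-module `K` has *projective dimension at most `m`*: there is an exact
sequence `0 → P_m → ⋯ → P_1 → P_0 → K → 0` with all `P_i` projective (encoded by a
projective resolution vanishing in degrees `> m`). -/
def ProjDimLE (K : Type u) [AddCommGroup K] [Module R K] (m : ℕ) : Prop :=
  ∃ (P : ℕ → ModuleCat.{u} R) (d : ∀ i, P (i + 1) ⟶ P i) (ε : P 0 →ₗ[R] K),
    (∀ i, Module.Projective R (P i)) ∧
    Function.Surjective ε ∧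
    Function.Exact (d 0) ε ∧
    (∀ i, Function.Exact (d (i + 1)) (d i)) ∧
    (∀ i, m < i → Subsingleton (P i))

end NWeak

/-! Computing every `Ext` from a projective resolution `P` of an `n`-super finitely presented
module `U` (finitely generated from degree `n` on), `Ext^{m+1}(U, M) = 0` says that
`Hom(P_•, M)` is exact at `P_{m+1}`. The special module `K_{n-1}` is resolved by `P_{≥ n}`, and
every shift of `P` resolves a syzygy of `U` that is again `n`-super finitely presented; hence
`Ext^{k+1}(K_{n-1}, M) = Ext^{n+k+1}(U, M)`, and `WIDimLE R n k M` says that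
`Ext^{n+k+j}(U, M) = 0` for all such `U` and all `j ≥ 1`, which gives (2).
A short exact sequence `0 → M → E_0 → C → 0` with `E_0` `n`-weak injective moves this vanishing
from `M` in degrees `≥ n + k + 1` to `C` in degrees `≥ n + k` and back; climbing the sequence
`0 → M → E_0 → ⋯ → E_k → 0` shows that `M` has dimension at most `k` iff `E_k` is `n`-weak
injective, which gives (3), and (4) by taking `E_0, …, E_{k-1}` injective. -/

namespace NWeak

variable {R : Type u} [Ring R]

section Exact

variable {A B C X : Type u} [AddCommGroup A] [Module R A] [AddCommGroup B] [Module R B]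
  [AddCommGroup C] [Module R C] [AddCommGroup X] [Module R X]

lemma exact_rangeRestrict {f : A →ₗ[R] B} {g : B →ₗ[R] C} (h : Function.Exact f g) :
    Function.Exact f g.rangeRestrict := by
  rwa [LinearMap.exact_iff, LinearMap.ker_rangeRestrict, ← LinearMap.exact_iff]

lemma exists_lift_of_exact {ι : A →ₗ[R] B} {π : B →ₗ[R] C} (hι : Function.Injective ι)
    (hιπ : Function.Exact ι π) (g : X →ₗ[R] B) (hg : π ∘ₗ g = 0) :
    ∃ a : X →ₗ[R] A, ι ∘ₗ a = g := by
  have hrange (x : X) : g x ∈ LinearMap.range ι := (hιπ (g x)).mp (LinearMap.congr_fun hg x)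
  refine ⟨(LinearEquiv.ofInjective ι hι).symm.toLinearMap ∘ₗ g.codRestrict _ hrange, ?_⟩
  ext x
  simp

lemma exists_extend_of_exact (E : Type u) [AddCommGroup E] [Module R E] [Module.Injective R E]
    {f : A →ₗ[R] B} {p : B →ₗ[R] C} (hfp : Function.Exact f p) (g : B →ₗ[R] E)
    (hg : g ∘ₗ f = 0) : ∃ h : C →ₗ[R] E, h ∘ₗ p = g := by
  have hker : LinearMap.ker p ≤ LinearMap.ker g := by
    intro x hx
    obtain ⟨y, rfl⟩ := (hfp x).mp hx
    exact LinearMap.congr_fun hg y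
  obtain ⟨h, hh⟩ := Module.Injective.extension_property R E _ _
    ((LinearMap.ker p).liftQ p le_rfl)
    (LinearMap.ker_eq_bot.mp (Submodule.ker_liftQ_eq_bot' _ _ rfl))
    ((LinearMap.ker p).liftQ g hker)
  refine ⟨h, ?_⟩
  ext x
  exact LinearMap.congr_fun hh (Submodule.Quotient.mk x)

end Exact

lemma extVanish_congr_left {i : ℕ} {K K' M : Type u} [AddCommGroup K] [Module R K]
    [AddCommGroup K'] [Module R K'] [AddCommGroup M] [Module R M] (e : K ≃ₗ[R] K') :
    extVanish R i K M ↔ extVanish R i K' M :=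
  (((Ext ℤ (ModuleCat.{u} R) i).mapIso
    e.toModuleIso.op).app (ModuleCat.of R M)).toLinearEquiv.toEquiv.subsingleton_congr.symm

variable (R) in
structure ProjResolution (K : Type u) [AddCommGroup K] [Module R K] where
  F : ℕ → ModuleCat.{u} R
  d : ∀ i, F (i + 1) ⟶ F i
  ε : F 0 →ₗ[R] K
  projective : ∀ i, Module.Projective R (F i)
  surjective : Function.Surjective ε
  exact_zero : Function.Exact (d 0) ε
  exact_succ : ∀ i, Function.Exact (d (i + 1)) (d i)

namespace ProjResolution

variable {K : Type u} [AddCommGroup K] [Module R K] (P : ProjResolution R K)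

def HomExactAt (M : Type u) [AddCommGroup M] [Module R M] (m : ℕ) : Prop :=
  ∀ g : P.F (m + 1) →ₗ[R] M, g ∘ₗ (P.d (m + 1)).hom = 0 →
    ∃ h : P.F m →ₗ[R] M, h ∘ₗ (P.d m).hom = g

def shift (j : ℕ) : ProjResolution R (LinearMap.range (P.d j).hom) where
  F i := P.F (j + 1 + i)
  d i := P.d (j + 1 + i)
  ε := (P.d j).hom.rangeRestrict
  projective _ := P.projective _
  surjective := LinearMap.surjective_rangeRestrict _
  exact_zero := exact_rangeRestrict (P.exact_succ j)
  exact_succ _ := P.exact_succ _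

def complex : ChainComplex (ModuleCat.{u} R) ℕ :=
  ChainComplex.of P.F P.d fun i => by ext x; exact (P.exact_succ i).apply_apply_eq_zero x

lemma complex_d (i : ℕ) : P.complex.d (i + 1) i = P.d i := ChainComplex.of_d _ _ _

def toProjectiveResolution : ProjectiveResolution (ModuleCat.of R K) where
  complex := P.complex
  projective i := (IsProjective.iff_projective (P.F i)).mp (P.projective i)
  π := (ChainComplex.toSingle₀Equiv _ _).symm ⟨ModuleCat.ofHom P.ε, by
    rw [complex_d]; ext x; exact P.exact_zero.apply_apply_eq_zero x⟩
  quasiIso := ⟨fun i => by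
    cases i with
    | zero =>
      rw [ChainComplex.quasiIsoAt₀_iff, ShortComplex.quasiIso_iff_of_zeros' _ rfl rfl rfl]
      constructor
      · rw [ShortComplex.moduleCat_exact_iff]
        intro x hx
        obtain ⟨y, hy⟩ := (P.exact_zero x).mp hx
        exact ⟨y, (congrArg (fun φ => φ.hom y) (P.complex_d 0)).trans hy⟩
      · exact (ModuleCat.epi_iff_surjective _).mpr P.surjective
    | succ i =>
      rw [quasiIsoAt_iff_exactAt' _ _ (ChainComplex.exactAt_succ_single_obj _ _),
        HomologicalComplex.exactAt_iff' _ (i + 2) (i + 1) i (by simp) (by simp),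
        ShortComplex.moduleCat_exact_iff]
      intro x hx
      simp only [HomologicalComplex.shortComplexFunctor'_obj_f,
        HomologicalComplex.shortComplexFunctor'_obj_g, complex_d] at hx ⊢
      exact (P.exact_succ i x).mp hx⟩

theorem extVanish_succ_iff (M : Type u) [AddCommGroup M] [Module R M] (m : ℕ) :
    extVanish R (m + 1) K M ↔ P.HomExactAt M m := by
  rw [extVanish, ← ModuleCat.isZero_iff_subsingleton.{u, 0},
    Iso.isZero_iff (P.toProjectiveResolution.isoExt (m + 1) (ModuleCat.of R M)),
    ← HomologicalComplex.exactAt_iff_isZero_homology,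
    HomologicalComplex.exactAt_iff' _ m (m + 1) (m + 2) (by simp) (by simp),
    ShortComplex.moduleCat_exact_iff]
  simp only [HomologicalComplex.sc', HomologicalComplex.shortComplexFunctor'_obj_f,
    HomologicalComplex.shortComplexFunctor'_obj_g, ChainComplex.linearYonedaObj_d]
  change (∀ g : P.F (m + 1) ⟶ ModuleCat.of R M, P.complex.d (m + 2) (m + 1) ≫ g = 0 →
    ∃ h, P.complex.d (m + 1) m ≫ h = g) ↔ _
  simp only [complex_d]
  constructor
  · intro h g hg
    obtain ⟨k, hk⟩ := h (ModuleCat.ofHom g) (ModuleCat.hom_ext hg)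
    exact ⟨k.hom, congrArg ModuleCat.Hom.hom hk⟩
  · intro h g hg
    obtain ⟨k, hk⟩ := h g.hom (congrArg ModuleCat.Hom.hom hg)
    exact ⟨ModuleCat.ofHom k, ModuleCat.hom_ext hk⟩

variable {A E C : Type u} [AddCommGroup A] [Module R A] [AddCommGroup E] [Module R E]
  [AddCommGroup C] [Module R C]

@[simp]
lemma d_d_apply (i : ℕ) (x : P.F (i + 2)) : P.d i (P.d (i + 1) x) = 0 :=
  (P.exact_succ i).apply_apply_eq_zero x

lemma homExactAt_congr (e : A ≃ₗ[R] E) (m : ℕ) : P.HomExactAt A m ↔ P.HomExactAt E m := by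
  suffices ∀ {A E : Type u} [AddCommGroup A] [Module R A] [AddCommGroup E] [Module R E]
      (e : A ≃ₗ[R] E), P.HomExactAt A m → P.HomExactAt E m from ⟨this e, this e.symm⟩
  intro A E _ _ _ _ e hA g hg
  obtain ⟨h, hh⟩ := hA (e.symm.toLinearMap ∘ₗ g) (by
    rw [LinearMap.comp_assoc, hg, LinearMap.comp_zero])
  refine ⟨e.toLinearMap ∘ₗ h, ?_⟩
  rw [LinearMap.comp_assoc, hh, ← LinearMap.comp_assoc, LinearEquiv.comp_symm, LinearMap.id_comp]

lemma homExactAt_of_subsingleton [Subsingleton A] (m : ℕ) : P.HomExactAt A m :=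
  fun _ _ => ⟨0, Subsingleton.elim _ _⟩

lemma homExactAt_of_injective [Module.Injective R E] (m : ℕ) : P.HomExactAt E m :=
  fun g hg => exists_extend_of_exact E (P.exact_succ m) g hg

section ShortExact

/-! For `0 → A → E → C → 0`, exactness of
`Ext^{m+1}(K, E) → Ext^{m+1}(K, C) → Ext^{m+2}(K, A) → Ext^{m+2}(K, E)`
at `Ext^{m+1}(K, C)` and at `Ext^{m+2}(K, A)`. -/

variable {ι : A →ₗ[R] E} {π : E →ₗ[R] C} (hι : Function.Injective ι)
  (hπ : Function.Surjective π) (hιπ : Function.Exact ι π)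
include hι hπ hιπ

lemma homExactAt_right_of_shortExact {m : ℕ} (hA : P.HomExactAt A (m + 1))
    (hE : P.HomExactAt E m) : P.HomExactAt C m := by
  intro g hg
  have := P.projective (m + 1)
  obtain ⟨g', hg'⟩ := Module.projective_lifting_property π g hπ
  obtain ⟨a, ha⟩ := exists_lift_of_exact hι hιπ (g' ∘ₗ (P.d (m + 1)).hom) (by
    rw [← LinearMap.comp_assoc, hg', hg])
  have ha_cocycle : a ∘ₗ (P.d (m + 2)).hom = 0 := by
    ext x
    apply hι
    simpa using LinearMap.congr_fun ha (P.d (m + 2) x)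
  obtain ⟨b, hb⟩ := hA a ha_cocycle
  obtain ⟨h, hh⟩ := hE (g' - ι ∘ₗ b) (by
    rw [LinearMap.sub_comp, LinearMap.comp_assoc, hb, ha, sub_self])
  refine ⟨π ∘ₗ h, ?_⟩
  rw [LinearMap.comp_assoc, hh, LinearMap.comp_sub, hg', ← LinearMap.comp_assoc,
    hιπ.linearMap_comp_eq_zero, LinearMap.zero_comp, sub_zero]

lemma homExactAt_left_of_shortExact {m : ℕ} (hC : P.HomExactAt C m)
    (hE : P.HomExactAt E (m + 1)) : P.HomExactAt A (m + 1) := by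
  intro a ha
  obtain ⟨e, he⟩ := hE (ι ∘ₗ a) (by rw [LinearMap.comp_assoc, ha, LinearMap.comp_zero])
  obtain ⟨c, hc⟩ := hC (π ∘ₗ e) (by
    rw [LinearMap.comp_assoc, he, ← LinearMap.comp_assoc, hιπ.linearMap_comp_eq_zero,
      LinearMap.zero_comp])
  have := P.projective m
  obtain ⟨c', hc'⟩ := Module.projective_lifting_property π c hπ
  obtain ⟨b, hb⟩ := exists_lift_of_exact hι hιπ (e - c' ∘ₗ (P.d m).hom) (by
    rw [LinearMap.comp_sub, ← LinearMap.comp_assoc, hc', hc, sub_self])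
  refine ⟨b, ?_⟩
  ext x
  apply hι
  have h1 := LinearMap.congr_fun hb ((P.d (m + 1)).hom x)
  have h2 := LinearMap.congr_fun he x
  simp only [LinearMap.comp_apply, LinearMap.sub_apply] at h1 h2
  rw [LinearMap.comp_apply, h1, h2, d_d_apply, map_zero, sub_zero]

end ShortExact

variable {M : Type u} [AddCommGroup M] [Module R M]

/-- `P.syzygy n` is the paper's `K_{n-1} = Im(P_n → P_{n-1})`, with `K_{-1} = K`. -/
def syzygy : ℕ → ModuleCat.{u} R
  | 0 => ModuleCat.of R K
  | m + 1 => ModuleCat.of R (LinearMap.range (P.d m).hom)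

lemma extVanish_range_iff (j m : ℕ) :
    extVanish R (m + 1) (LinearMap.range (P.d j).hom) M ↔ extVanish R (j + 1 + m + 1) K M :=
  ((P.shift j).extVanish_succ_iff M m).trans (P.extVanish_succ_iff M (j + 1 + m)).symm

lemma extVanish_syzygy_iff (n m : ℕ) :
    extVanish R (m + 1) (P.syzygy n) M ↔ extVanish R (n + m + 1) K M := by
  cases n with
  | zero => rw [Nat.zero_add]; rfl
  | succ j => exact P.extVanish_range_iff j m

lemma isNSuperFP {n : ℕ} (hfin : ∀ i, n ≤ i → Module.Finite R (P.F i)) : IsNSuperFP R n K :=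
  ⟨P.F, P.d, P.ε, P.projective, hfin, P.surjective, P.exact_zero, P.exact_succ⟩

lemma isSpecialSFP_syzygy {n : ℕ} (hfin : ∀ i, n ≤ i → Module.Finite R (P.F i)) :
    IsSpecialSFP R n (P.syzygy n) :=
  ⟨P.F, P.d, ModuleCat.of R K, ModuleCat.ofHom P.ε, P.projective, hfin, P.surjective,
    P.exact_zero, P.exact_succ, by cases n <;> exact ⟨LinearEquiv.refl _ _⟩⟩

end ProjResolution

lemma IsNSuperFP.exists_projResolution {n : ℕ} {U : Type u} [AddCommGroup U] [Module R U]
    (hU : IsNSuperFP R n U) :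
    ∃ P : ProjResolution R U, ∀ i, n ≤ i → Module.Finite R (P.F i) := by
  obtain ⟨F, d, ε, hproj, hfin, hsurj, hex0, hex⟩ := hU
  exact ⟨⟨F, d, ε, hproj, hsurj, hex0, hex⟩, hfin⟩

lemma IsSpecialSFP.exists_projResolution {n : ℕ} {K : Type u} [AddCommGroup K] [Module R K]
    (hK : IsSpecialSFP R n K) :
    ∃ (U : ModuleCat.{u} R) (P : ProjResolution R U),
      (∀ i, n ≤ i → Module.Finite R (P.F i)) ∧ Nonempty (K ≃ₗ[R] P.syzygy n) := by
  obtain ⟨F, d, U, ε, hproj, hfin, hsurj, hex0, hex, hK⟩ := hK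
  exact ⟨U, ⟨F, d, ε.hom, hproj, hsurj, hex0, hex⟩, hfin, by cases n <;> exact hK⟩

variable (R) in
def ExtVanishOnSuperFP (n N : ℕ) (M : Type u) [AddCommGroup M] [Module R M] : Prop :=
  ∀ U : ModuleCat.{u} R, IsNSuperFP R n U → extVanish R (N + 1) U M

section ExtVanishOnSuperFP

variable {n N k : ℕ} {M : Type u} [AddCommGroup M] [Module R M]

lemma isNWeakInjective_iff : IsNWeakInjective R n M ↔ ExtVanishOnSuperFP R n n M := Iff.rfl

lemma extVanishOnSuperFP_iff :
    ExtVanishOnSuperFP R n N M ↔ ∀ (U : ModuleCat.{u} R) (P : ProjResolution R U),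
      (∀ i, n ≤ i → Module.Finite R (P.F i)) → P.HomExactAt M N := by
  refine ⟨fun h U P hfin => (P.extVanish_succ_iff M N).mp (h U (P.isNSuperFP hfin)),
    fun h U hU => ?_⟩
  obtain ⟨P, hfin⟩ := hU.exists_projResolution
  exact (P.extVanish_succ_iff M N).mpr (h U P hfin)

lemma ExtVanishOnSuperFP.add (h : ExtVanishOnSuperFP R n N M) (t : ℕ) :
    ExtVanishOnSuperFP R n (N + t) M := by
  rw [extVanishOnSuperFP_iff] at h ⊢
  intro U P hfin
  cases t with
  | zero => exact h U P hfin
  | succ p =>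
    rw [show N + (p + 1) = p + 1 + N by omega]
    exact h (ModuleCat.of R _) (P.shift p) fun i hi => hfin _ (by omega)

theorem wiDimLE_iff_extVanishOnSuperFP :
    WIDimLE R n k M ↔ ExtVanishOnSuperFP R n (n + k) M := by
  refine ⟨fun h U hU => ?_, fun h K hK => ?_⟩
  · obtain ⟨P, hfin⟩ := hU.exists_projResolution
    exact (P.extVanish_syzygy_iff n k).mp (h _ (P.isSpecialSFP_syzygy hfin))
  · obtain ⟨U, P, hfin, ⟨e⟩⟩ := hK.exists_projResolution
    rw [extVanish_congr_left e, P.extVanish_syzygy_iff]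
    exact h U (P.isNSuperFP hfin)

lemma WIDimLE.extVanish_add (h : WIDimLE R n k M) {K : Type u} [AddCommGroup K] [Module R K]
    (hK : IsSpecialSFP R n K) (j : ℕ) : extVanish R (k + j + 1) K M := by
  obtain ⟨U, P, hfin, ⟨e⟩⟩ := hK.exists_projResolution
  rw [extVanish_congr_left e, P.extVanish_syzygy_iff, ← Nat.add_assoc]
  exact (wiDimLE_iff_extVanishOnSuperFP.mp h).add j U (P.isNSuperFP hfin)

end ExtVanishOnSuperFP

lemma isNWeakInjective_of_injective {n : ℕ} (E : Type u) [AddCommGroup E] [Module R E]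
    [Module.Injective R E] : IsNWeakInjective R n E :=
  extVanishOnSuperFP_iff.mpr fun _ P _ => P.homExactAt_of_injective n

lemma isNWeakInjective_of_subsingleton {n : ℕ} (E : Type u) [AddCommGroup E] [Module R E]
    [Subsingleton E] : IsNWeakInjective R n E :=
  extVanishOnSuperFP_iff.mpr fun _ P _ => P.homExactAt_of_subsingleton n

variable (R) in
structure Coresolution (M : Type u) [AddCommGroup M] [Module R M] (k : ℕ) where
  E : ℕ → ModuleCat.{u} R
  f : M →ₗ[R] E 0
  d : ∀ i, E i ⟶ E (i + 1)
  injective : Function.Injective f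
  exact_zero : Function.Exact f (d 0)
  exact_succ : ∀ i, Function.Exact (d i) (d (i + 1))
  subsingleton : ∀ i, k < i → Subsingleton (E i)

namespace Coresolution

variable {M : Type u} [AddCommGroup M] [Module R M] {k : ℕ}

lemma surjective (C : Coresolution R M 0) : Function.Surjective C.f := fun y =>
  have := C.subsingleton 1 one_pos
  (C.exact_zero y).mp (Subsingleton.elim _ _)

def tail (C : Coresolution R M (k + 1)) : Coresolution R (LinearMap.range (C.d 0).hom) k where
  E i := C.E (i + 1)
  f := (LinearMap.range (C.d 0).hom).subtype
  d i := C.d (i + 1)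
  injective := Submodule.injective_subtype _
  exact_zero := by
    rw [LinearMap.exact_iff, Submodule.range_subtype, LinearMap.exact_iff.mp (C.exact_succ 0)]
  exact_succ i := C.exact_succ (i + 1)
  subsingleton i hi := C.subsingleton (i + 1) (by omega)

def single (M : Type u) [AddCommGroup M] [Module R M] : Coresolution R M 0 where
  E i := Nat.casesOn i (ModuleCat.of R M) fun _ => ModuleCat.of R PUnit
  f := LinearMap.id
  d _ := 0
  injective := Function.injective_id
  exact_zero y := ⟨fun _ => ⟨y, rfl⟩, fun _ => rfl⟩
  exact_succ _ _ := ⟨fun _ => ⟨0, Subsingleton.elim _ _⟩, fun _ => Subsingleton.elim _ _⟩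
  subsingleton i hi := by
    obtain ⟨j, rfl⟩ : ∃ j, i = j + 1 := ⟨i - 1, by omega⟩
    exact inferInstanceAs (Subsingleton PUnit)

def cons {J : ModuleCat.{u} R} (ι : M →ₗ[R] J) (hι : Function.Injective ι)
    (C : Coresolution R (J ⧸ LinearMap.range ι) k) : Coresolution R M (k + 1) where
  E i := Nat.casesOn i J C.E
  f := ι
  d i := Nat.casesOn i (ModuleCat.ofHom (C.f ∘ₗ (LinearMap.range ι).mkQ)) C.d
  injective := hι
  exact_zero := by
    rw [LinearMap.exact_iff]
    change LinearMap.ker (C.f ∘ₗ (LinearMap.range ι).mkQ) = _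
    rw [LinearMap.ker_comp, LinearMap.ker_eq_bot.mpr C.injective, Submodule.comap_bot,
      Submodule.ker_mkQ]
  exact_succ i := by
    cases i with
    | zero =>
      rw [LinearMap.exact_iff]
      change _ = LinearMap.range (C.f ∘ₗ (LinearMap.range ι).mkQ)
      rw [LinearMap.range_comp, Submodule.range_mkQ, Submodule.map_top,
        LinearMap.exact_iff.mp C.exact_zero]
    | succ j => exact C.exact_succ j
  subsingleton i hi := by
    obtain ⟨j, rfl⟩ : ∃ j, i = j + 1 := ⟨i - 1, by omega⟩
    exact C.subsingleton j (by omega)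

theorem exists_injective (M : Type u) [AddCommGroup M] [Module R M] (k : ℕ) :
    ∃ C : Coresolution R M k, ∀ i < k, Module.Injective R (C.E i) := by
  induction k generalizing M with
  | zero => exact ⟨single M, fun _ h => absurd h (Nat.not_lt_zero _)⟩
  | succ k ih =>
    let ι := Injective.ι (ModuleCat.of R M)
    let J := Injective.under (ModuleCat.of R M)
    obtain ⟨C, hC⟩ := ih (J ⧸ LinearMap.range ι.hom)
    refine ⟨cons ι.hom ((ModuleCat.mono_iff_injective ι).mp inferInstance) C, fun i hi => ?_⟩
    cases i with
    | zero =>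
      exact Module.injective_module_of_injective_object (inj := inferInstanceAs (Injective J)) R _
    | succ j => exact hC j (by omega)

lemma homExactAt_add_iff (C : Coresolution R M k) {U : Type u} [AddCommGroup U] [Module R U]
    (P : ProjResolution R U) {N : ℕ} (hE : ∀ i < k, ∀ m, P.HomExactAt (C.E i) (N + m)) :
    P.HomExactAt M (N + k) ↔ P.HomExactAt (C.E k) N := by
  induction k generalizing M with
  | zero => exact P.homExactAt_congr (.ofBijective C.f ⟨C.injective, C.surjective⟩) N
  | succ k ih =>
    have hses := exact_rangeRestrict C.exact_zero
    refine Iff.trans ?_ (ih C.tail fun i hi m => hE (i + 1) (by omega) m)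
    exact ⟨fun hM => P.homExactAt_right_of_shortExact C.injective
        (LinearMap.surjective_rangeRestrict _) hses hM (hE 0 (by omega) k),
      fun hC => P.homExactAt_left_of_shortExact C.injective
        (LinearMap.surjective_rangeRestrict _) hses hC (hE 0 (by omega) (k + 1))⟩

theorem wiDimLE_iff {n : ℕ} (C : Coresolution R M k) (hE : ∀ i < k, IsNWeakInjective R n (C.E i)) :
    WIDimLE R n k M ↔ IsNWeakInjective R n (C.E k) := by
  rw [wiDimLE_iff_extVanishOnSuperFP, isNWeakInjective_iff, extVanishOnSuperFP_iff,
    extVanishOnSuperFP_iff]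
  refine forall_congr' fun U => forall_congr' fun P => imp_congr_right fun hfin =>
    C.homExactAt_add_iff P fun i hi m => ?_
  exact extVanishOnSuperFP_iff.mp (ExtVanishOnSuperFP.add (hE i hi) m) U P hfin

end Coresolution

end NWeak

open NWeak in
/-- For a left `R`-module `M` the following are equivalent:
(1) the `n`-weak injective dimension of `M` is at most `k` (i.e.
`Ext_R^{k+1}(K, M) = 0` for all special super finitely presented `K`);
(2) `Ext_R^{k+i}(K, M) = 0` for all special super finitely presented `K` and `i ≥ 1`;
(3) in any exact sequence `0 → M → E_0 → ⋯ → E_k → 0` with `E_0, …, E_{k-1}`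
`n`-weak injective, `E_k` is also `n`-weak injective;
(4) there is an exact sequence `0 → M → E_0 → ⋯ → E_k → 0` with all `E_i`
`n`-weak injective. -/
theorem wiDimLE_tfae
    (R : Type u) [Ring R] (n k : ℕ) (M : Type u) [AddCommGroup M] [Module R M] :
    (WIDimLE R n k M ↔
      (∀ (K : Type u) [AddCommGroup K] [Module R K], IsSpecialSFP R n K →
        ∀ i : ℕ, 1 ≤ i → extVanish R (k + i) K M)) ∧
    (WIDimLE R n k M ↔
      (∀ (E : ℕ → ModuleCat.{u} R) (f : M →ₗ[R] E 0) (d : ∀ i, E i ⟶ E (i + 1)),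
        Function.Injective f → Function.Exact f (d 0) →
        (∀ i, Function.Exact (d i) (d (i + 1))) →
        (∀ i, k < i → Subsingleton (E i)) →
        (∀ i, i < k → IsNWeakInjective R n (E i)) → IsNWeakInjective R n (E k))) ∧
    (WIDimLE R n k M ↔
      (∃ (E : ℕ → ModuleCat.{u} R) (f : M →ₗ[R] E 0) (d : ∀ i, E i ⟶ E (i + 1)),
        Function.Injective f ∧ Function.Exact f (d 0) ∧
        (∀ i, Function.Exact (d i) (d (i + 1))) ∧
        (∀ i, k < i → Subsingleton (E i)) ∧
        (∀ i, IsNWeakInjective R n (E i)))) := by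
  obtain ⟨C, hC⟩ := Coresolution.exists_injective (R := R) M k
  have hCE (i : ℕ) (hi : i < k) : IsNWeakInjective R n (C.E i) :=
    have := hC i hi
    isNWeakInjective_of_injective _
  refine ⟨⟨fun h K _ _ hK i hi => ?_, fun h K hK => h K hK 1 le_rfl⟩,
    ⟨fun h E f d hf h0 hs hsub hE =>
      (Coresolution.wiDimLE_iff ⟨E, f, d, hf, h0, hs, hsub⟩ hE).mp h,
     fun h => (C.wiDimLE_iff hCE).mpr
      (h C.E C.f C.d C.injective C.exact_zero C.exact_succ C.subsingleton hCE)⟩,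
    ⟨fun h => ⟨C.E, C.f, C.d, C.injective, C.exact_zero, C.exact_succ, C.subsingleton,
      fun i => ?_⟩, ?_⟩⟩
  · obtain ⟨j, rfl⟩ : ∃ j, i = j + 1 := ⟨i - 1, by omega⟩
    exact h.extVanish_add hK j
  · rcases lt_trichotomy i k with hi | rfl | hi
    · exact hCE i hi
    · exact (C.wiDimLE_iff hCE).mp h
    · have := C.subsingleton i hi
      exact isNWeakInjective_of_subsingleton _
  · rintro ⟨E, f, d, hf, h0, hs, hsub, hE⟩
    exact (Coresolution.wiDimLE_iff ⟨E, f, d, hf, h0, hs, hsub⟩ fun i _ => hE i).mpr (hE k)
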